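/- Let ν be a probability measure on ℝ with finite first moment satisfying λ·q̄_ν(λ) → 0 as λ → 0⁺. Define G̃(x) = sup_{λ ∈ (0,1)}(λ·q̄_ν(λ) − λx) for x in the support interval of ν. Then G̃ is convex, non-negative, non-increasing, with one-sided derivatives in [−1,0], and there exists a probability measure ν_Δ with C_{ν_Δ}(x) = G̃(x), given explicitly by ν_Δ([x,∞)) = −G̃'(x−). -/

import Mathlib

/-
The function `G x = ⨆ λ, (λ q(λ) - λ x)` is a supremum of affine functions with slopes in
`(-1, 0)`, so it is convex, antitone and `x ↦ G x + x` is monotone; `λ q(λ) → 0` gives `G ≥ 0`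
and `G x → 0` as `x → ∞`. Its right derivative `G'(·+)` is therefore nondecreasing,
right-continuous and runs from `-1` at `-∞` (since `G` dominates an affine function of slope
`-λ` for every `λ < 1`) to `0` at `+∞`. Hence `G'(·+)` is, up to the constant `1`, the
distribution function of a probability measure `νΔ` with `νΔ (x, ∞) = -G'(x+)`. By the
layer-cake formula `C_{νΔ}(x) = ∫ₓ^∞ νΔ (s, ∞) ds = G x - G ∞ = G x`, and since the left limit
of `G'(·+)` at `x` is `G'(x-)`, also `νΔ [x, ∞) = -G'(x-)`.
-/
open MeasureTheory Set Filter Topology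

/-- Tail function `μ([x,∞))`. -/
noncomputable def tailFn (μ : Measure ℝ) (x : ℝ) : ℝ := (μ (Ici x)).toReal

/-- Tail quantile function: left-continuous inverse of the tail function. -/
noncomputable def tailQ (μ : Measure ℝ) (l : ℝ) : ℝ := sInf {x : ℝ | tailFn μ x < l}

/-- Call function `C_μ(K) = ∫ (s-K)⁺ μ(ds)`. -/
noncomputable def callFn (μ : Measure ℝ) (K : ℝ) : ℝ := ∫ s, max (s - K) 0 ∂μ

/-- Average Value at Risk at level `l`. -/
noncomputable def avar (μ : Measure ℝ) (l : ℝ) : ℝ := (1 / l) * ∫ u in (0 : ℝ)..l, tailQ μ u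

/-- Hardy–Littlewood transform of `μ`: the law of `AVaR_μ(ξ)` for `ξ` uniform on `[0,1]`. -/
noncomputable def hlTransform (μ : Measure ℝ) : Measure ℝ :=
  Measure.map (avar μ) (volume.restrict (Ioc (0 : ℝ) 1))

noncomputable def rightDeriv (G : ℝ → ℝ) (x : ℝ) : ℝ := derivWithin G (Ioi x) x

lemma continuousAt_slope_left {f : ℝ → ℝ} (hf : Continuous f) {x y : ℝ} (h : x ≠ y) :
    ContinuousAt (fun z => slope f z y) x := by
  simp_rw [slope_def_field]
  exact ((hf.continuousAt.const_sub _).div (continuousAt_const.sub continuousAt_id)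
    (sub_ne_zero.2 h.symm))

lemma continuousAt_slope_right {f : ℝ → ℝ} (hf : Continuous f) {x y : ℝ} (h : x ≠ y) :
    ContinuousAt (fun z => slope f y z) x := by
  simp_rw [slope_comm f y]
  exact continuousAt_slope_left hf h

lemma neg_one_le_derivWithin {G : ℝ → ℝ} {s : Set ℝ} {x : ℝ} (hmono : Monotone fun x => G x + x) :
    -1 ≤ derivWithin G s x := by
  by_cases hd : DifferentiableWithinAt ℝ G s x
  · by_cases hx : AccPt x (𝓟 s)
    · have := (hd.hasDerivWithinAt.add (hasDerivWithinAt_id x s)).nonneg_of_monotoneOn hx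
        (hmono.monotoneOn s)
      linarith
    · simp [derivWithin_zero_of_not_accPt hx]
  · simp [derivWithin_zero_of_not_differentiableWithinAt hd]

lemma callFn_eq_toReal_lintegral (μ : Measure ℝ) (K : ℝ) :
    callFn μ K = (∫⁻ s in Ioi K, μ (Ioi s)).toReal := by
  have hnn : 0 ≤ᵐ[μ] fun s => max (s - K) 0 := ae_of_all _ fun s => le_max_right _ _
  have hmeas : Measurable fun s : ℝ => max (s - K) 0 := by fun_prop
  rw [callFn, integral_eq_lintegral_of_nonneg_ae hnn hmeas.aestronglyMeasurable,
    lintegral_eq_lintegral_meas_lt μ hnn hmeas.aemeasurable,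
    ← (measurePreserving_add_left volume K).setLIntegral_comp_preimage_emb
      (measurableEmbedding_addLeft K) (fun s => μ (Ioi s)), preimage_const_add_Ioi, sub_self]
  congr 1
  refine setLIntegral_congr_fun measurableSet_Ioi fun t (ht : 0 < t) => ?_
  congr 1
  ext s
  simp only [mem_ofPred_eq, mem_Ioi, lt_max_iff, ht.not_gt, or_false]
  constructor <;> intro h <;> linarith

lemma tendsto_measure_Ici_atTop (μ : Measure ℝ) [IsFiniteMeasure μ] :
    Tendsto (fun x => μ (Ici x)) atTop (𝓝 0) := by
  have hempty : ⋂ x : ℝ, Ici x = ∅ :=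
    eq_empty_of_forall_notMem fun y hy => (lt_add_one y).not_ge (mem_iInter.1 hy (y + 1))
  have h := tendsto_measure_iInter_atTop (μ := μ)
    (fun _ => measurableSet_Ici.nullMeasurableSet) antitone_Ici ⟨0, measure_ne_top μ _⟩
  rwa [hempty, measure_empty] at h

namespace ConvexOn

variable {G : ℝ → ℝ} (hG : ConvexOn ℝ univ G)
include hG

protected lemma continuous : Continuous G :=
  continuousOn_univ.1 (hG.continuousOn isOpen_univ)

lemma hasDerivWithinAt_rightDeriv (x : ℝ) : HasDerivWithinAt G (rightDeriv G x) (Ioi x) x :=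
  hG.hasDerivWithinAt_rightDeriv_of_mem_interior (by simp)

lemma monotone_rightDeriv : Monotone (rightDeriv G) := fun x y hxy =>
  hG.monotoneOn_rightDeriv (by simp) (by simp) hxy

lemma rightDeriv_le_slope_of_lt {x y : ℝ} (hxy : x < y) : rightDeriv G x ≤ slope G x y :=
  hG.rightDeriv_le_slope_of_mem_interior (by simp) (mem_univ y) hxy

lemma slope_le_rightDeriv_of_lt {x y : ℝ} (hxy : x < y) : slope G x y ≤ rightDeriv G y :=
  (hG.slope_le_leftDeriv_of_mem_interior (mem_univ x) (by simp) hxy).trans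
    (hG.leftDeriv_le_rightDeriv_of_mem_interior (by simp))

lemma continuousWithinAt_rightDeriv (x : ℝ) : ContinuousWithinAt (rightDeriv G) (Ici x) x := by
  obtain ⟨L, hL⟩ : ∃ L, Tendsto (rightDeriv G) (𝓝[>] x) (𝓝 L) :=
    ⟨_, hG.monotone_rightDeriv.tendsto_nhdsGT x⟩
  have hslope : Tendsto (slope G x) (𝓝[>] x) (𝓝 (rightDeriv G x)) :=
    (hasDerivWithinAt_iff_tendsto_slope' self_notMem_Ioi).1 (hG.hasDerivWithinAt_rightDeriv x)
  -- `G'(z+) ≤ slope G z y` for `x < z < y` passes to the limit `z → x+`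
  have hL_le : ∀ y, x < y → L ≤ slope G x y := fun y hxy =>
    le_of_tendsto_of_tendsto hL ((continuousAt_slope_left hG.continuous hxy.ne).mono_left
      nhdsWithin_le_nhds) <| by
      filter_upwards [Ioo_mem_nhdsGT hxy] with z hz using hG.rightDeriv_le_slope_of_lt hz.2
  have hL_eq : L = rightDeriv G x := le_antisymm
    (ge_of_tendsto hslope (eventually_nhdsWithin_of_forall hL_le))
    (ge_of_tendsto hL (eventually_nhdsWithin_of_forall fun z hz =>
      hG.monotone_rightDeriv (le_of_lt hz)))
  rw [← continuousWithinAt_Ioi_iff_Ici, ContinuousWithinAt, ← hL_eq]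
  exact hL

lemma tendsto_rightDeriv_nhdsLT (x : ℝ) :
    Tendsto (rightDeriv G) (𝓝[<] x) (𝓝 (derivWithin G (Iio x) x)) := by
  obtain ⟨L, hL⟩ : ∃ L, Tendsto (rightDeriv G) (𝓝[<] x) (𝓝 L) :=
    ⟨_, hG.monotone_rightDeriv.tendsto_nhdsLT x⟩
  have hslope : Tendsto (slope G x) (𝓝[<] x) (𝓝 (derivWithin G (Iio x) x)) :=
    (hasDerivWithinAt_iff_tendsto_slope' self_notMem_Iio).1
      (hG.hasDerivWithinAt_leftDeriv_of_mem_interior (by simp))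
  -- `slope G y z ≤ G'(z+)` for `y < z < x` passes to the limit `z → x-`
  have hle_L : ∀ y, y < x → slope G x y ≤ L := fun y hyx => by
    rw [slope_comm]
    refine le_of_tendsto_of_tendsto ((continuousAt_slope_right hG.continuous hyx.ne').mono_left
      nhdsWithin_le_nhds) hL ?_
    filter_upwards [Ioo_mem_nhdsLT hyx] with z hz using hG.slope_le_rightDeriv_of_lt hz.1
  have hL_eq : L = derivWithin G (Iio x) x := le_antisymm
    (le_of_tendsto hL (eventually_nhdsWithin_of_forall fun z (hz : z < x) =>
      (hG.rightDeriv_le_slope_of_lt hz).trans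
        (hG.slope_le_leftDeriv_of_mem_interior (mem_univ z) (by simp) hz)))
    (le_of_tendsto hslope (eventually_nhdsWithin_of_forall hle_L))
  rwa [← hL_eq]

lemma integral_rightDeriv {a b : ℝ} (hab : a ≤ b) : ∫ t in a..b, rightDeriv G t = G b - G a :=
  intervalIntegral.integral_eq_sub_of_hasDeriv_right_of_le hab
    hG.continuous.continuousOn
    (fun x _ => hG.hasDerivWithinAt_rightDeriv x) hG.monotone_rightDeriv.intervalIntegrable

lemma lintegral_Ioi_neg_rightDeriv (hanti : Antitone G) (htop : Tendsto G atTop (𝓝 0)) (x : ℝ) :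
    ∫⁻ s in Ioi x, ENNReal.ofReal (-rightDeriv G s) = ENNReal.ofReal (G x) := by
  have hIoc : ∀ b, x ≤ b → ∫⁻ s in Iic b, ENNReal.ofReal (-rightDeriv G s) ∂volume.restrict (Ioi x)
      = ENNReal.ofReal (G x - G b) := fun b hxb => by
    rw [Measure.restrict_restrict measurableSet_Iic, Iic_inter_Ioi,
      ← ofReal_integral_eq_lintegral_ofReal, ← intervalIntegral.integral_of_le hxb,
      intervalIntegral.integral_neg, hG.integral_rightDeriv hxb, neg_sub]
    · exact (hG.monotone_rightDeriv.intervalIntegrable.neg).1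
    · exact ae_of_all _ fun s => neg_nonneg.2 ((hanti.antitoneOn _).derivWithin_nonpos)
  refine (aecover_Iic tendsto_id).lintegral_eq_of_tendsto _
    (hG.monotone_rightDeriv.measurable.neg.ennreal_ofReal.aemeasurable) ?_
  refine Tendsto.congr' (eventually_ge_atTop x |>.mono fun b hb => (hIoc b hb).symm) ?_
  exact ENNReal.tendsto_ofReal (by simpa using tendsto_const_nhds.sub htop)

lemma tendsto_rightDeriv_atTop (hanti : Antitone G) (htop : Tendsto G atTop (𝓝 0)) :
    Tendsto (rightDeriv G) atTop (𝓝 0) := by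
  have hlow : Tendsto (fun x => G x - G (x - 1)) atTop (𝓝 0) := by
    simpa [← sub_eq_add_neg] using
      htop.sub (htop.comp (tendsto_atTop_add_const_right atTop (-1) tendsto_id))
  refine tendsto_of_tendsto_of_tendsto_of_le_of_le hlow tendsto_const_nhds (fun x => ?_)
    (fun x => (hanti.antitoneOn _).derivWithin_nonpos)
  simpa [slope_def_field] using hG.slope_le_rightDeriv_of_lt (sub_one_lt x)

lemma tendsto_rightDeriv_atBot (hmono : Monotone fun x => G x + x)
    (hdom : ∀ l ∈ Ioo (0 : ℝ) 1, ∃ C, ∀ x, C - l * x ≤ G x) :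
    Tendsto (rightDeriv G) atBot (𝓝 (-1)) := by
  refine tendsto_order.2 ⟨fun a ha => Eventually.of_forall fun x =>
    ha.trans_le (neg_one_le_derivWithin hmono), fun a ha => ?_⟩
  obtain ⟨l, hl, hl1⟩ := exists_between (max_lt (neg_lt.1 ha) one_pos : max (-a) 0 < 1)
  obtain ⟨C, hC⟩ := hdom l ⟨(le_max_right _ _).trans_lt hl, hl1⟩
  -- comparing with the chord to `0`: `G'(x+) ≤ (G 0 - G x) / (-x) ≤ (G 0 - C) / (-x) - l`
  have hsmall : Tendsto (fun x : ℝ => (G 0 - C) / -x) atBot (𝓝 0) :=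
    (tendsto_const_nhds.div_atTop tendsto_neg_atBot_atTop)
  filter_upwards [hsmall.eventually (gt_mem_nhds (by linarith [le_max_left (-a) 0] : 0 < a + l)),
    eventually_lt_atBot 0] with x hx hx0
  have h1 := hG.rightDeriv_le_slope_of_lt hx0
  rw [slope_def_field, zero_sub] at h1
  have h2 : (G 0 - G x) / -x ≤ (G 0 - C) / -x - l := by
    rw [div_sub' (by linarith), div_le_div_iff_of_pos_right (by linarith)]
    linarith [hC x]
  linarith

noncomputable def rightDerivStieltjes : StieltjesFunction ℝ where
  toFun := rightDeriv G
  mono' := hG.monotone_rightDeriv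
  right_continuous' := hG.continuousWithinAt_rightDeriv

lemma exists_isProbabilityMeasure_callFn_eq (hanti : Antitone G)
    (hmono : Monotone fun x => G x + x) (htop : Tendsto G atTop (𝓝 0))
    (hdom : ∀ l ∈ Ioo (0 : ℝ) 1, ∃ C, ∀ x, C - l * x ≤ G x) :
    ∃ μ : Measure ℝ, IsProbabilityMeasure μ ∧ (∀ x, callFn μ x = G x) ∧
      ∀ x, (μ (Ici x)).toReal = -derivWithin G (Iio x) x := by
  set F := hG.rightDerivStieltjes
  have hF_top : Tendsto F atTop (𝓝 0) := hG.tendsto_rightDeriv_atTop hanti htop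
  have hF_bot : Tendsto F atBot (𝓝 (-1)) := hG.tendsto_rightDeriv_atBot hmono hdom
  refine ⟨F.measure, ⟨by simp [F.measure_univ hF_bot hF_top]⟩, fun x => ?_, fun x => ?_⟩
  · have hIoi : ∀ s, F.measure (Ioi s) = ENNReal.ofReal (-rightDeriv G s) := fun s => by
      rw [F.measure_Ioi hF_top, zero_sub]; rfl
    simp_rw [callFn_eq_toReal_lintegral, hIoi, hG.lintegral_Ioi_neg_rightDeriv hanti htop,
      ENNReal.toReal_ofReal (hanti.le_of_tendsto htop x)]
  · rw [F.measure_Ici hF_top, leftLim_eq_of_tendsto (f := F) (hG.tendsto_rightDeriv_nhdsLT x),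
      zero_sub, ENNReal.toReal_ofReal]
    exact neg_nonneg.2 ((hanti.antitoneOn _).derivWithin_nonpos)

end ConvexOn

section SupAffine

variable {ι : Type*} {a b : ι → ℝ}

lemma bddAbove_range_sub_mul (ha : BddAbove (range a)) (hb : ∀ i, b i ∈ Icc (0 : ℝ) 1) (x : ℝ) :
    BddAbove (range fun i => a i - b i * x) := by
  obtain ⟨M, hM⟩ := ha
  refine ⟨M + |x|, forall_mem_range.2 fun i => ?_⟩
  have hbx : -(b i * x) ≤ |x| := calc
    -(b i * x) ≤ |b i| * |x| := (neg_le_abs _).trans (abs_mul _ _).le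
    _ ≤ |x| := mul_le_of_le_one_left (abs_nonneg x) (abs_le.2 ⟨by linarith [(hb i).1], (hb i).2⟩)
  linarith [hM (mem_range_self i)]

variable (hbdd : ∀ x, BddAbove (range fun i => a i - b i * x))
include hbdd

lemma antitone_ciSup_sub_mul (hb : ∀ i, 0 ≤ b i) : Antitone fun x => ⨆ i, a i - b i * x :=
  fun _ _ hxy => ciSup_mono (hbdd _) fun i =>
    sub_le_sub_left (mul_le_mul_of_nonneg_left hxy (hb i)) _

variable [Nonempty ι]

lemma convexOn_ciSup_sub_mul : ConvexOn ℝ univ fun x => ⨆ i, a i - b i * x := by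
  refine ⟨convex_univ, fun x _ y _ s t hs ht hst => ciSup_le fun i => ?_⟩
  calc a i - b i * (s • x + t • y) = s * (a i - b i * x) + t * (a i - b i * y) := by
        simp only [smul_eq_mul]; linear_combination (-a i) * hst
    _ ≤ s • (⨆ i, a i - b i * x) + t • ⨆ i, a i - b i * y := by
        simp only [smul_eq_mul]
        exact add_le_add (mul_le_mul_of_nonneg_left (le_ciSup (hbdd x) i) hs)
          (mul_le_mul_of_nonneg_left (le_ciSup (hbdd y) i) ht)

lemma monotone_ciSup_sub_mul_add (hb : ∀ i, b i ≤ 1) :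
    Monotone fun x => (⨆ i, a i - b i * x) + x := fun x y hxy => by
  have : ⨆ i, a i - b i * x ≤ (⨆ i, a i - b i * y) + (y - x) := ciSup_le fun i => by
    nlinarith [le_ciSup (hbdd y) i, mul_nonneg (sub_nonneg.2 (hb i)) (sub_nonneg.2 hxy)]
  linarith

end SupAffine

section QuantileSup

variable {f : ℝ → ℝ} (h0 : Tendsto (fun l => l * f l) (𝓝[>] 0) (𝓝 0))
include h0

lemma ciSup_mul_sub_mul_nonneg {x : ℝ}
    (hbdd : BddAbove (range fun l : Ioo (0 : ℝ) 1 => (l : ℝ) * f l - l * x)) :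
    0 ≤ ⨆ l : Ioo (0 : ℝ) 1, (l : ℝ) * f l - l * x := by
  have hlim : Tendsto (fun l => l * f l - l * x) (𝓝[>] 0) (𝓝 0) := by
    simpa using h0.sub ((continuous_mul_const x).tendsto' 0 0 (zero_mul x) |>.mono_left
      nhdsWithin_le_nhds)
  refine le_of_tendsto hlim ?_
  filter_upwards [Ioo_mem_nhdsGT one_pos] with l hl using le_ciSup hbdd ⟨l, hl⟩

lemma tendsto_ciSup_mul_sub_mul_atTop {M : ℝ} (hM : ∀ l ∈ Ioo (0 : ℝ) 1, l * f l ≤ M) :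
    Tendsto (fun x => ⨆ l : Ioo (0 : ℝ) 1, (l : ℝ) * f l - l * x) atTop (𝓝 0) := by
  have hbdd := bddAbove_range_sub_mul (a := fun l : Ioo (0 : ℝ) 1 => (l : ℝ) * f l)
    ⟨M, forall_mem_range.2 fun l => hM l l.2⟩ fun l => Ioo_subset_Icc_self l.2
  refine tendsto_order.2 ⟨fun ε hε => Eventually.of_forall fun x =>
    hε.trans_le (ciSup_mul_sub_mul_nonneg h0 (hbdd x)), fun ε hε => ?_⟩
  obtain ⟨u, hu, hsmall⟩ :=
    mem_nhdsGT_iff_exists_Ioo_subset.1 (h0.eventually (gt_mem_nhds (half_pos hε)))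
  filter_upwards [eventually_ge_atTop 0, eventually_gt_atTop ((M - ε / 2) / u)] with x hx0 hxM
  rw [div_lt_iff₀ hu] at hxM
  have := nonempty_Ioo_subtype (zero_lt_one' ℝ)
  refine lt_of_le_of_lt (ciSup_le fun l => ?_) (half_lt_self hε)
  rcases lt_or_ge (l : ℝ) u with hlu | hul
  · have : (l : ℝ) * f l < ε / 2 := hsmall ⟨l.2.1, hlu⟩
    nlinarith [l.2.1]
  · nlinarith [hM l l.2]

end QuantileSup

section Tail

variable (ν : Measure ℝ) [IsProbabilityMeasure ν]

lemma antitone_tailFn : Antitone (tailFn ν) := fun _ _ hxy =>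
  ENNReal.toReal_mono (measure_ne_top ν _) (measure_mono (Ici_subset_Ici.2 hxy))

lemma tendsto_tailFn_atTop : Tendsto (tailFn ν) atTop (𝓝 0) :=
  (ENNReal.tendsto_toReal ENNReal.zero_ne_top).comp (tendsto_measure_Ici_atTop ν)

lemma tendsto_tailFn_atBot : Tendsto (tailFn ν) atBot (𝓝 1) := by
  have h := (ENNReal.tendsto_toReal ENNReal.one_ne_top).comp
    (measure_univ (μ := ν) ▸ tendsto_measure_Ici_atBot ν)
  rwa [ENNReal.toReal_one] at h

lemma antitoneOn_tailQ : AntitoneOn (tailQ ν) (Ioo 0 1) := fun a ha b hb hab => by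
  obtain ⟨x₀, hx₀⟩ := ((tendsto_tailFn_atBot ν).eventually (lt_mem_nhds hb.2)).exists
  refine csInf_le_csInf ⟨x₀, fun y (hy : tailFn ν y < b) => ?_⟩
    ((tendsto_tailFn_atTop ν).eventually (gt_mem_nhds ha.1)).exists fun y hy => hy.trans_le hab
  by_contra! hyx
  exact (antitone_tailFn ν hyx.le).not_gt (hy.trans hx₀)

lemma exists_mul_tailQ_le (h0 : Tendsto (fun l => l * tailQ ν l) (𝓝[>] 0) (𝓝 0)) :
    ∃ M, ∀ l ∈ Ioo (0 : ℝ) 1, l * tailQ ν l ≤ M := by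
  obtain ⟨u, hu : 0 < u, hsmall⟩ :=
    mem_nhdsGT_iff_exists_Ioo_subset.1 (h0.eventually (gt_mem_nhds one_pos))
  obtain ⟨l₀, hl₀0, hl₀u1⟩ := exists_between (lt_min hu one_pos)
  obtain ⟨hl₀u, hl₀1⟩ := lt_min_iff.1 hl₀u1
  have hl₀ : l₀ ∈ Ioo 0 1 := ⟨hl₀0, hl₀1⟩
  refine ⟨max 1 (tailQ ν l₀), fun l hl => ?_⟩
  rcases lt_or_ge l l₀ with hll₀ | hl₀l
  · exact (hsmall ⟨hl.1, hll₀.trans hl₀u⟩ : l * tailQ ν l < 1).le.trans (le_max_left _ _)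
  · calc l * tailQ ν l ≤ l * max 1 (tailQ ν l₀) := mul_le_mul_of_nonneg_left
          ((antitoneOn_tailQ ν hl₀ hl hl₀l).trans (le_max_right _ _)) hl.1.le
      _ ≤ max 1 (tailQ ν l₀) :=
          mul_le_of_le_one_left (zero_le_one.trans (le_max_left _ _)) hl.2.le

end Tail

theorem stmt_10_general (ν : Measure ℝ) [IsProbabilityMeasure ν]
    (h0 : Tendsto (fun l => l * tailQ ν l) (nhdsWithin 0 (Ioi (0 : ℝ))) (nhds 0))
    (G : ℝ → ℝ) (hG : ∀ x, G x = ⨆ l : Ioo (0 : ℝ) 1, ((l : ℝ) * tailQ ν (l : ℝ) - (l : ℝ) * x))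
    (lν rν : ℝ) :
    ConvexOn ℝ (Icc lν rν) G ∧
    (∀ x ∈ Icc lν rν, 0 ≤ G x) ∧
    AntitoneOn G (Icc lν rν) ∧
    (∀ x ∈ Icc lν rν, -1 ≤ derivWithin G (Iio x) x ∧ derivWithin G (Iio x) x ≤ 0 ∧
      -1 ≤ derivWithin G (Ioi x) x ∧ derivWithin G (Ioi x) x ≤ 0) ∧
    ∃ νΔ : Measure ℝ, IsProbabilityMeasure νΔ ∧
      (∀ x ∈ Icc lν rν, callFn νΔ x = G x) ∧
      (∀ x ∈ Icc lν rν, (νΔ (Ici x)).toReal = - derivWithin G (Iio x) x) := by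
  obtain ⟨M, hM⟩ := exists_mul_tailQ_le ν h0
  obtain rfl : G = fun x => ⨆ l : Ioo (0 : ℝ) 1, (l : ℝ) * tailQ ν l - l * x := funext hG
  have hb : ∀ l : Ioo (0 : ℝ) 1, (l : ℝ) ∈ Icc (0 : ℝ) 1 := fun l => Ioo_subset_Icc_self l.2
  have hbdd := bddAbove_range_sub_mul (a := fun l : Ioo (0 : ℝ) 1 => (l : ℝ) * tailQ ν l)
    ⟨M, forall_mem_range.2 fun l => hM l l.2⟩ hb
  have := nonempty_Ioo_subtype (zero_lt_one' ℝ)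
  have hconv := convexOn_ciSup_sub_mul hbdd
  have hanti := antitone_ciSup_sub_mul hbdd fun l => (hb l).1
  have hmono := monotone_ciSup_sub_mul_add hbdd fun l => (hb l).2
  have htop := tendsto_ciSup_mul_sub_mul_atTop h0 hM
  refine ⟨hconv.subset (subset_univ _) (convex_Icc _ _), fun x _ => hanti.le_of_tendsto htop x,
    hanti.antitoneOn _, fun x _ => ⟨neg_one_le_derivWithin hmono,
    (hanti.antitoneOn _).derivWithin_nonpos, neg_one_le_derivWithin hmono,
    (hanti.antitoneOn _).derivWithin_nonpos⟩, ?_⟩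
  obtain ⟨μ, hμ, hcall, hIci⟩ := hconv.exists_isProbabilityMeasure_callFn_eq hanti hmono htop
    fun l hl => ⟨l * tailQ ν l, fun x => le_ciSup (hbdd x) ⟨l, hl⟩⟩
  exact ⟨μ, hμ, fun x _ => hcall x, fun x _ => hIci x⟩

theorem stmt_10 (ν : Measure ℝ) [IsProbabilityMeasure ν] (hν : Integrable id ν)
    (h0 : Tendsto (fun l => l * tailQ ν l) (nhdsWithin 0 (Ioi (0 : ℝ))) (nhds 0))
    (G : ℝ → ℝ) (hG : ∀ x, G x = ⨆ l : Ioo (0 : ℝ) 1, ((l : ℝ) * tailQ ν (l : ℝ) - (l : ℝ) * x))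
    (lν rν : ℝ) (hl : lν = sSup {x : ℝ | ν (Iio x) = 0}) (hr : rν = sInf {x : ℝ | ν (Ioi x) = 0}) :
    ConvexOn ℝ (Icc lν rν) G ∧
    (∀ x ∈ Icc lν rν, 0 ≤ G x) ∧
    AntitoneOn G (Icc lν rν) ∧
    (∀ x ∈ Icc lν rν, -1 ≤ derivWithin G (Iio x) x ∧ derivWithin G (Iio x) x ≤ 0 ∧
      -1 ≤ derivWithin G (Ioi x) x ∧ derivWithin G (Ioi x) x ≤ 0) ∧
    ∃ νΔ : Measure ℝ, IsProbabilityMeasure νΔ ∧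
      (∀ x ∈ Icc lν rν, callFn νΔ x = G x) ∧
      (∀ x ∈ Icc lν rν, (νΔ (Ici x)).toReal = - derivWithin G (Iio x) x) :=
  stmt_10_general ν h0 G hG lν rν
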